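/- Let n₁, n₂ ≥ 3 be odd and coprime, and let n = n₁·n₂. Then there exist a unitary map V : ℂ^{ℤ/nℤ} → ℂ^{ℤ/n₁ℤ} ⊗ ℂ^{ℤ/n₂ℤ} and a group isomorphism φ = (φ₁, φ₂) : (ℤ/nℤ)² → (ℤ/n₁ℤ)² × (ℤ/n₂ℤ)² such that V·D^{(n)}_p·V† = D^{(n₁)}_{φ₁(p)} ⊗ D^{(n₂)}_{φ₂(p)} for all p ∈ (ℤ/nℤ)²; that is, the Weyl–Heisenberg displacement operators in dimension n₁n₂ split canonically as tensor products of displacement operators in dimensions n₁ and n₂. -/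

import Mathlib

open Matrix Complex Kronecker

/-- `τ_n = -exp(iπ/n)`. -/
noncomputable def tau (n : ℕ) : ℂ := -Complex.exp (Real.pi * Complex.I / n)

/-- The displacement operator `D^{(n)}_p = D_{i,j}`, with `(r,s)` entry
`τ_n^{ij+2js} δ_{r,s+i}` (exponents of the `n`-th root of unity `τ_n` mod `n`). -/
noncomputable def Disp (n : ℕ) [NeZero n] (p : ZMod n × ZMod n) :
    Matrix (ZMod n) (ZMod n) ℂ :=
  Matrix.of fun r s =>
    tau n ^ ((p.1 * p.2 + 2 * p.2 * s).val) * (if r = s + p.1 then 1 else 0)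

/-!
The Chinese remainder isomorphism `ℤ/n₁n₂ ≃ ℤ/n₁ × ℤ/n₂` is a bijection of the standard bases,
and conjugating by its permutation matrix simply reindexes `D_p`. Shifts split componentwise.
For the phases, `τ_n` is an `n`-th root of unity when `n` is odd, and
`τ_{n₁n₂}^{n₂} = τ_{n₁}`, `τ_{n₁n₂}^{n₁} = τ_{n₂}`; writing `x ≡ n₂ a + n₁ b (mod n₁n₂)` with
`a = n₂⁻¹ x mod n₁`, `b = n₁⁻¹ x mod n₂` gives `τ_{n₁n₂}^x = τ_{n₁}^a τ_{n₂}^b`. This is why the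
momentum coordinate is rescaled by `n₂⁻¹` resp. `n₁⁻¹` in the phase-space isomorphism.
-/

theorem tau_mul_pow {m n : ℕ} (hm : m ≠ 0) (hn : Odd n) : tau (m * n) ^ n = tau m := by
  have hn₀ : (n : ℂ) ≠ 0 := by exact_mod_cast hn.pos.ne'
  have hm₀ : (m : ℂ) ≠ 0 := by exact_mod_cast hm
  rw [tau, tau, neg_pow, hn.neg_one_pow, ← Complex.exp_nat_mul]
  push_cast
  field_simp

theorem tau_pow_self {n : ℕ} (hn : Odd n) : tau n ^ n = 1 := by
  simpa [tau, Complex.exp_pi_mul_I] using tau_mul_pow one_ne_zero hn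

theorem tau_pow_val_natCast {n : ℕ} (hn : Odd n) (a : ℕ) :
    tau n ^ (a : ZMod n).val = tau n ^ a := by
  rw [ZMod.val_natCast, ← pow_eq_pow_mod a (tau_pow_self hn)]

theorem tau_pow_val_chineseRemainder {n₁ n₂ : ℕ} (h₁ : Odd n₁) (h₂ : Odd n₂)
    (hcop : n₁.Coprime n₂) {u : ZMod n₁} {v : ZMod n₂} (hu : u * n₂ = 1) (hv : v * n₁ = 1)
    (x : ZMod (n₁ * n₂)) :
    tau (n₁ * n₂) ^ x.val =
      tau n₁ ^ (u * (ZMod.chineseRemainder hcop x).1).val *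
        tau n₂ ^ (v * (ZMod.chineseRemainder hcop x).2).val := by
  have := NeZero.of_pos h₁.pos
  have := NeZero.of_pos h₂.pos
  set e := ZMod.chineseRemainder hcop
  set a := (u * (e x).1).val
  set b := (v * (e x).2).val
  have hx : x = ((n₂ * a + n₁ * b : ℕ) : ZMod (n₁ * n₂)) := by
    apply e.injective
    ext
    · rw [map_natCast, Prod.fst_natCast]
      push_cast [a, b, ZMod.natCast_self, ZMod.natCast_zmod_val]
      linear_combination (-(e x).1) * hu
    · rw [map_natCast, Prod.snd_natCast]
      push_cast [a, b, ZMod.natCast_self, ZMod.natCast_zmod_val]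
      linear_combination (-(e x).2) * hv
  have hτ₂ : tau (n₁ * n₂) ^ n₁ = tau n₂ := by
    rw [mul_comm]; exact tau_mul_pow h₂.pos.ne' h₁
  rw [← tau_mul_pow h₁.pos.ne' h₂, ← hτ₂, ← pow_mul, ← pow_mul, ← pow_add, hx,
    tau_pow_val_natCast (h₁.mul h₂)]

section PermutationMatrix

variable {m n R : Type*} [DecidableEq m] [DecidableEq n] [Semiring R] [StarRing R]

theorem PEquiv.conjTranspose_toMatrix_toPEquiv (e : m ≃ n) :
    (e.toPEquiv.toMatrix : Matrix m n R)ᴴ = e.symm.toPEquiv.toMatrix := by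
  rw [Equiv.toPEquiv_symm, PEquiv.toMatrix_symm]
  ext i j
  simp [PEquiv.toMatrix_apply, apply_ite star]

theorem PEquiv.conjTranspose_toMatrix_toPEquiv_mul_self [Fintype m] (e : m ≃ n) :
    (e.toPEquiv.toMatrix : Matrix m n R)ᴴ * (e.toPEquiv.toMatrix : Matrix m n R) = 1 := by
  rw [PEquiv.conjTranspose_toMatrix_toPEquiv, ← PEquiv.toMatrix_trans, ← Equiv.toPEquiv_trans,
    Equiv.symm_trans_self, Equiv.toPEquiv_refl, PEquiv.toMatrix_refl]

theorem PEquiv.toMatrix_toPEquiv_mul_conjTranspose_self [Fintype n] (e : m ≃ n) :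
    (e.toPEquiv.toMatrix : Matrix m n R) * (e.toPEquiv.toMatrix : Matrix m n R)ᴴ = 1 := by
  rw [PEquiv.conjTranspose_toMatrix_toPEquiv, ← PEquiv.toMatrix_trans, ← Equiv.toPEquiv_trans,
    Equiv.self_trans_symm, Equiv.toPEquiv_refl, PEquiv.toMatrix_refl]

theorem PEquiv.toMatrix_toPEquiv_mul_mul_conjTranspose [Fintype n] (e : m ≃ n)
    (A : Matrix n n R) :
    (e.toPEquiv.toMatrix : Matrix m n R) * A * (e.toPEquiv.toMatrix : Matrix m n R)ᴴ =
      A.submatrix e e := by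
  rw [PEquiv.conjTranspose_toMatrix_toPEquiv, PEquiv.toMatrix_toPEquiv_mul,
    PEquiv.mul_toMatrix_toPEquiv, submatrix_submatrix, Equiv.symm_symm]
  rfl

end PermutationMatrix

noncomputable def crtPhaseSpaceEquiv {n₁ n₂ : ℕ} (hcop : n₁.Coprime n₂) (u : (ZMod n₁)ˣ)
    (v : (ZMod n₂)ˣ) :
    (ZMod (n₁ * n₂) × ZMod (n₁ * n₂)) ≃+ (ZMod n₁ × ZMod n₁) × (ZMod n₂ × ZMod n₂) :=
  let e := (ZMod.chineseRemainder hcop).toAddEquiv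
  (e.prodCongr e).trans <| (AddEquiv.prodProdProdComm _ _ _ _).trans <|
    ((AddEquiv.refl _).prodCongr (LinearEquiv.smulOfUnit u).toAddEquiv).prodCongr
      ((AddEquiv.refl _).prodCongr (LinearEquiv.smulOfUnit v).toAddEquiv)

theorem crtPhaseSpaceEquiv_apply {n₁ n₂ : ℕ} (hcop : n₁.Coprime n₂) (u : (ZMod n₁)ˣ)
    (v : (ZMod n₂)ˣ) (p : ZMod (n₁ * n₂) × ZMod (n₁ * n₂)) :
    crtPhaseSpaceEquiv hcop u v p =
      letI e := ZMod.chineseRemainder hcop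
      (((e p.1).1, u * (e p.2).1), ((e p.1).2, v * (e p.2).2)) :=
  rfl

theorem Disp_submatrix_chineseRemainder_symm {n₁ n₂ : ℕ} [NeZero n₁] [NeZero n₂]
    (h₁ : Odd n₁) (h₂ : Odd n₂) (hcop : n₁.Coprime n₂) {u : (ZMod n₁)ˣ} {v : (ZMod n₂)ˣ}
    (hu : (u : ZMod n₁) * n₂ = 1) (hv : (v : ZMod n₂) * n₁ = 1)
    (p : ZMod (n₁ * n₂) × ZMod (n₁ * n₂)) :
    (Disp (n₁ * n₂) p).submatrix (ZMod.chineseRemainder hcop).symm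
        (ZMod.chineseRemainder hcop).symm =
      Disp n₁ (crtPhaseSpaceEquiv hcop u v p).1 ⊗ₖ Disp n₂ (crtPhaseSpaceEquiv hcop u v p).2 := by
  ext x y
  obtain ⟨r, rfl⟩ := (ZMod.chineseRemainder hcop).surjective x
  obtain ⟨s, rfl⟩ := (ZMod.chineseRemainder hcop).surjective y
  simp only [submatrix_apply, RingEquiv.symm_apply_apply, kroneckerMap_apply, Disp, of_apply]
  rw [mul_mul_mul_comm, ite_zero_mul_ite_zero, one_mul, crtPhaseSpaceEquiv_apply]
  congr 1
  · rw [tau_pow_val_chineseRemainder h₁ h₂ hcop hu hv]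
    simp only [map_add, map_mul, map_ofNat, Prod.fst_add, Prod.fst_mul, Prod.snd_add,
      Prod.snd_mul, Prod.fst_ofNat, Prod.snd_ofNat]
    congr 3 <;> ring
  · refine if_congr ?_ rfl rfl
    rw [← (ZMod.chineseRemainder hcop).injective.eq_iff, map_add, Prod.ext_iff]
    rfl

theorem weyl_heisenberg_crt_splitting_general
    (n₁ n₂ : ℕ) [NeZero n₁] [NeZero n₂]
    (h₁ : Odd n₁) (h₂ : Odd n₂)
    (hcop : Nat.Coprime n₁ n₂) :
    ∃ (V : Matrix (ZMod n₁ × ZMod n₂) (ZMod (n₁ * n₂)) ℂ)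
      (φ : (ZMod (n₁ * n₂) × ZMod (n₁ * n₂)) ≃+
        ((ZMod n₁ × ZMod n₁) × (ZMod n₂ × ZMod n₂))),
      Vᴴ * V = 1 ∧ V * Vᴴ = 1 ∧
      ∀ p : ZMod (n₁ * n₂) × ZMod (n₁ * n₂),
        V * Disp (n₁ * n₂) p * Vᴴ = Disp n₁ (φ p).1 ⊗ₖ Disp n₂ (φ p).2 := by
  let u := (ZMod.unitOfCoprime n₂ hcop.symm)⁻¹
  let v := (ZMod.unitOfCoprime n₁ hcop)⁻¹
  have hu : (u : ZMod n₁) * n₂ = 1 := by simp [u]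
  have hv : (v : ZMod n₂) * n₁ = 1 := by simp [v]
  let e := (ZMod.chineseRemainder hcop).symm.toEquiv
  refine ⟨e.toPEquiv.toMatrix, crtPhaseSpaceEquiv hcop u v,
    PEquiv.conjTranspose_toMatrix_toPEquiv_mul_self e,
    PEquiv.toMatrix_toPEquiv_mul_conjTranspose_self e, fun p => ?_⟩
  rw [PEquiv.toMatrix_toPEquiv_mul_mul_conjTranspose]
  exact Disp_submatrix_chineseRemainder_symm h₁ h₂ hcop hu hv p

/-- Chinese remaindering of the Weyl–Heisenberg group: for odd coprime
`n₁, n₂`, there are a unitary `V : ℂ^{ℤ/n₁n₂ℤ} → ℂ^{ℤ/n₁ℤ} ⊗ ℂ^{ℤ/n₂ℤ}` and a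
group isomorphism `φ : (ℤ/n₁n₂ℤ)² ≃ (ℤ/n₁ℤ)² × (ℤ/n₂ℤ)²` such that
`V D^{(n₁n₂)}_p V† = D^{(n₁)}_{φ₁(p)} ⊗ D^{(n₂)}_{φ₂(p)}` for all `p`. -/
theorem weyl_heisenberg_crt_splitting
    (n₁ n₂ : ℕ) [NeZero n₁] [NeZero n₂]
    (h₁ : Odd n₁) (h₂ : Odd n₂) (h₁3 : 3 ≤ n₁) (h₂3 : 3 ≤ n₂)
    (hcop : Nat.Coprime n₁ n₂) :
    ∃ (V : Matrix (ZMod n₁ × ZMod n₂) (ZMod (n₁ * n₂)) ℂ)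
      (φ : (ZMod (n₁ * n₂) × ZMod (n₁ * n₂)) ≃+
        ((ZMod n₁ × ZMod n₁) × (ZMod n₂ × ZMod n₂))),
      Vᴴ * V = 1 ∧ V * Vᴴ = 1 ∧
      ∀ p : ZMod (n₁ * n₂) × ZMod (n₁ * n₂),
        V * Disp (n₁ * n₂) p * Vᴴ = Disp n₁ (φ p).1 ⊗ₖ Disp n₂ (φ p).2 :=
  weyl_heisenberg_crt_splitting_general n₁ n₂ h₁ h₂ hcop
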